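/- Let p be a prime, e ≥ 1, k ≥ 1, c ≥ 1 integers. Let F be a free group and R a normal subgroup of F such that γ_{k+1}(F) ≤ R and x^(p^e) ∈ R for every x ∈ F. Then every outer-commutator value u ∈ F of weight exactly c + k satisfies u^(p^e) ∈ [R, cF]. -/

import Mathlib

/-!
Induct on the bracketing `u = ⁅v, w⁆`, with `v` of weight `a` and `w` of weight `b`. By induction
`v ^ n ∈ [R, (a - k)F]`, so `⁅v ^ n, w⁆ ∈ ⁅[R, (a - k)F], γ_b(F)⁆ ≤ [R, (a + b - k)F]`. On the
other hand `⁅v, w⁆ ∈ γ_{a+b}(F)`, which is central modulo `γ_{a+b+1}(F) ≤ [R, (a + b - k)F]`,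
and for a central commutator `⁅v, w⁆ ^ n = ⁅v ^ n, w⁆`. Here `γ_{i+1}(F)` is Mathlib's
`lowerCentralSeries i`.
-/

/-- `[R, cF]`: the iterated commutator subgroup, `[R, 0F] = R`,
`[R, (i+1)F] = ⁅[R, iF], F⁆`. -/
def iteratedCommutator {F : Type*} [Group F] (R : Subgroup F) : ℕ → Subgroup F
  | 0 => R
  | c + 1 => ⁅iteratedCommutator R c, (⊤ : Subgroup F)⁆

open scoped commutatorElement

/-- `IsOuterCommutatorOn l u` means that `u` is an outer-commutator value on
the list of entries `l` (of weight `l.length`). -/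
inductive IsOuterCommutatorOn {F : Type*} [Group F] : List F → F → Prop
  | base (x : F) : IsOuterCommutatorOn [x] x
  | comm {l₁ l₂ : List F} {u v : F} :
      IsOuterCommutatorOn l₁ u → IsOuterCommutatorOn l₂ v →
      IsOuterCommutatorOn (l₁ ++ l₂) ⁅u, v⁆

section

open Subgroup

variable {G : Type*} [Group G]

theorem commutatorElement_pow_left_of_commute {v w : G} (h : Commute ⁅v, w⁆ v) (n : ℕ) :
    ⁅v ^ n, w⁆ = ⁅v, w⁆ ^ n := by
  induction n with
  | zero => simp
  | succ n ih =>
    calc ⁅v ^ (n + 1), w⁆ = v * ⁅v ^ n, w⁆ * v⁻¹ * ⁅v, w⁆ := by group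
      _ = ⁅v, w⁆ ^ (n + 1) := by rw [ih, ← (h.pow_left n).eq, mul_inv_cancel_right, pow_succ]

theorem commutatorElement_pow_mem_iff {N : Subgroup G} [N.Normal] {v w : G}
    (h : ∀ x, ⁅⁅v, w⁆, x⁆ ∈ N) (n : ℕ) : ⁅v, w⁆ ^ n ∈ N ↔ ⁅v ^ n, w⁆ ∈ N := by
  let f := QuotientGroup.mk' N
  have hf (g : G) : g ∈ N ↔ f g = 1 := (QuotientGroup.eq_one_iff g).symm
  have hcomm : Commute ⁅f v, f w⁆ (f v) := by
    rw [← commutatorElement_eq_one_iff_commute, ← map_commutatorElement, ← map_commutatorElement,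
      ← hf]
    exact h v
  rw [hf, hf, map_pow, map_commutatorElement, map_commutatorElement, map_pow,
    commutatorElement_pow_left_of_commute hcomm]

namespace Subgroup

theorem commutator_commutator_le_of_rotate {H₁ H₂ H₃ N : Subgroup G} [N.Normal]
    (h1 : ⁅⁅H₂, H₃⁆, H₁⁆ ≤ N) (h2 : ⁅⁅H₃, H₁⁆, H₂⁆ ≤ N) : ⁅⁅H₁, H₂⁆, H₃⁆ ≤ N := by
  simp only [← QuotientGroup.ker_mk' N, ← map_eq_bot_iff, map_commutator] at h1 h2 ⊢
  exact commutator_commutator_eq_bot_of_rotate h1 h2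

end Subgroup

section iteratedCommutator

variable (R : Subgroup G)

theorem iteratedCommutator_succ (c : ℕ) :
    iteratedCommutator R (c + 1) = ⁅iteratedCommutator R c, ⊤⁆ := rfl

instance iteratedCommutator_normal [R.Normal] (c : ℕ) : (iteratedCommutator R c).Normal := by
  induction c with
  | zero => assumption
  | succ c ih => rw [iteratedCommutator_succ]; infer_instance

theorem iteratedCommutator_antitone [R.Normal] : Antitone (iteratedCommutator R) :=
  antitone_nat_of_succ_le fun _ => commutator_le_left _ _

variable {R} in
theorem iteratedCommutator_mono {S : Subgroup G} (h : R ≤ S) (c : ℕ) :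
    iteratedCommutator R c ≤ iteratedCommutator S c := by
  induction c with
  | zero => exact h
  | succ c ih => exact commutator_mono ih le_rfl

theorem iteratedCommutator_lowerCentralSeries (k c : ℕ) :
    iteratedCommutator ((⊤ : Subgroup G).lowerCentralSeries k) c =
      (⊤ : Subgroup G).lowerCentralSeries (k + c) := by
  induction c with
  | zero => rfl
  | succ c ih => rw [iteratedCommutator_succ, ih]; rfl

theorem commutator_iteratedCommutator_lowerCentralSeries_le [R.Normal] (i j : ℕ) :
    ⁅iteratedCommutator R i, (⊤ : Subgroup G).lowerCentralSeries j⁆ ≤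
      iteratedCommutator R (i + j + 1) := by
  induction j generalizing i with
  | zero => exact le_rfl
  | succ j ih =>
    rw [Subgroup.lowerCentralSeries_succ, commutator_comm]
    apply commutator_commutator_le_of_rotate
    · rw [commutator_comm ⊤, ← iteratedCommutator_succ,
        show i + (j + 1) + 1 = i + 1 + j + 1 by omega]
      exact ih (i + 1)
    · exact commutator_mono (ih i) le_rfl

end iteratedCommutator

theorem commutator_lowerCentralSeries_le (m n : ℕ) :
    ⁅(⊤ : Subgroup G).lowerCentralSeries m, (⊤ : Subgroup G).lowerCentralSeries n⁆ ≤
      (⊤ : Subgroup G).lowerCentralSeries (m + n + 1) := by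
  simpa only [iteratedCommutator_lowerCentralSeries, zero_add] using
    commutator_iteratedCommutator_lowerCentralSeries_le
      ((⊤ : Subgroup G).lowerCentralSeries 0) m n

theorem lowerCentralSeries_le_iteratedCommutator {R : Subgroup G} {k : ℕ}
    (h : (⊤ : Subgroup G).lowerCentralSeries k ≤ R) (c : ℕ) :
    (⊤ : Subgroup G).lowerCentralSeries (k + c) ≤ iteratedCommutator R c := by
  rw [← iteratedCommutator_lowerCentralSeries]; exact iteratedCommutator_mono h c

namespace IsOuterCommutatorOn

variable {l : List G} {u : G}

theorem length_pos (hu : IsOuterCommutatorOn l u) : 0 < l.length := by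
  induction hu with
  | base x => simp
  | comm _ _ ih _ => rw [List.length_append]; omega

theorem mem_lowerCentralSeries (hu : IsOuterCommutatorOn l u) :
    u ∈ (⊤ : Subgroup G).lowerCentralSeries (l.length - 1) := by
  induction hu with
  | base x => exact mem_top x
  | @comm l₁ l₂ v w hv hw ihv ihw =>
    have hlen : l₁.length - 1 + (l₂.length - 1) + 1 = (l₁ ++ l₂).length - 1 := by
      have := hv.length_pos; have := hw.length_pos
      rw [List.length_append]; omega
    exact hlen ▸ commutator_lowerCentralSeries_le _ _ (commutator_mem_commutator ihv ihw)

-- `l.length - k` truncates: for weights at most `k` the claim is just `u ^ n ∈ R`.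
theorem pow_mem_iteratedCommutator {R : Subgroup G} [R.Normal] {k n : ℕ} (hk : 1 ≤ k)
    (hnil : (⊤ : Subgroup G).lowerCentralSeries k ≤ R) (hexp : ∀ x : G, x ^ n ∈ R)
    (hu : IsOuterCommutatorOn l u) : u ^ n ∈ iteratedCommutator R (l.length - k) := by
  induction hu with
  | base x =>
    rw [List.length_singleton, Nat.sub_eq_zero_of_le hk]
    exact hexp x
  | @comm l₁ l₂ v w hv hw ihv _ =>
    set m := (l₁ ++ l₂).length - k with hm
    rcases Nat.eq_zero_or_pos m with hm0 | hm0
    · rw [hm0]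
      exact hexp _
    have hcentral (x : G) : ⁅⁅v, w⁆, x⁆ ∈ iteratedCommutator R m := by
      apply lowerCentralSeries_le_iteratedCommutator hnil m
      rw [show k + m = (l₁ ++ l₂).length - 1 + 1 by omega]
      exact commutator_mem_commutator (hv.comm hw).mem_lowerCentralSeries (mem_top x)
    rw [commutatorElement_pow_mem_iff hcentral]
    have hlen : m ≤ l₁.length - k + (l₂.length - 1) + 1 := by
      have := hw.length_pos
      rw [hm, List.length_append]; omega
    exact iteratedCommutator_antitone R hlen <|
      commutator_iteratedCommutator_lowerCentralSeries_le R _ _ <|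
        commutator_mem_commutator ihv hw.mem_lowerCentralSeries

end IsOuterCommutatorOn

end

theorem outerCommutator_pow_mem_of_weight_eq_general {F : Type*} [Group F]
    (R : Subgroup F) [R.Normal] (p e k c : ℕ)
    (hk : 1 ≤ k)
    (hnil : (⊤ : Subgroup F).lowerCentralSeries k ≤ R)
    (hexp : ∀ x : F, x ^ (p ^ e) ∈ R)
    (l : List F) (u : F) (hu : IsOuterCommutatorOn l u)
    (hw : l.length = c + k) :
    u ^ (p ^ e) ∈ iteratedCommutator R c := by
  simpa only [hw, Nat.add_sub_cancel] using hu.pow_mem_iteratedCommutator hk hnil hexp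

/-- Base case `w = c + k` of the inverse induction in the proof of Lemma 3.1:
if `γ_{k+1}(F) ≤ R` and `x^(p^e) ∈ R` for all `x ∈ F`, then every
outer-commutator value `u` of weight exactly `c + k` satisfies
`u^(p^e) ∈ [R, cF]`. -/
theorem outerCommutator_pow_mem_of_weight_eq {F : Type*} [Group F]
    [IsFreeGroup F] (R : Subgroup F) [R.Normal] (p e k c : ℕ) (hp : p.Prime)
    (he : 1 ≤ e) (hk : 1 ≤ k) (hc : 1 ≤ c)
    (hnil : (⊤ : Subgroup F).lowerCentralSeries k ≤ R)
    (hexp : ∀ x : F, x ^ (p ^ e) ∈ R)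
    (l : List F) (u : F) (hu : IsOuterCommutatorOn l u)
    (hw : l.length = c + k) :
    u ^ (p ^ e) ∈ iteratedCommutator R c :=
  outerCommutator_pow_mem_of_weight_eq_general R p e k c hk hnil hexp l u hu hw
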